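/- arXiv:1909.01539 — 2 statements merged into one kernel-verified Lean document; each statement's English description precedes it below -/
import Mathlib

section
/- Let U be a unitary n×n matrix, let A = {U diag(c) U* : c ∈ Tⁿ} where Tⁿ is the set of vectors in ℂⁿ all of whose entries have modulus 1, and let W be any n×n complex matrix. Set y_i = (U* W U)_{ii}, define c₀ by (c₀)_i = y_i/|y_i| if y_i ≠ 0 and 1 otherwise, and set C₀ = U diag(c₀) U*. Then C₀ minimizes ‖W − C‖_F over all C ∈ A. -/
open Matrix

/-- Frobenius norm of a complex matrix. -/
noncomputable def frob {m n : Type*} [Fintype m] [Fintype n] (A : Matrix m n ℂ) : ℝ :=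
  Real.sqrt (∑ i, ∑ j, ‖A i j‖ ^ 2)

lemma frob_sq_eq_trace {n : Type*} [Fintype n] (A : Matrix n n ℂ) :
    ∑ i, ∑ j, ‖A i j‖ ^ 2 = (Matrix.trace (Aᴴ * A)).re := by
  simp only [Matrix.trace, Matrix.diag, Matrix.mul_apply, Matrix.conjTranspose_apply]
  rw [Complex.re_sum]
  rw [Finset.sum_comm]
  refine Finset.sum_congr rfl fun i _ => ?_
  rw [Complex.re_sum]
  refine Finset.sum_congr rfl fun j _ => ?_
  rw [Complex.star_def, ← Complex.normSq_eq_conj_mul_self, Complex.ofReal_re,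
    ← Complex.sq_norm]

lemma frob_conj {n : Type*} [Fintype n] [DecidableEq n]
    (U A : Matrix n n ℂ) (hU : U ∈ Matrix.unitaryGroup n ℂ) :
    frob (Uᴴ * A * U) = frob A := by
  have h1 : U * Uᴴ = 1 := (Matrix.mem_unitaryGroup_iff.mp hU)
  have h2 : Uᴴ * U = 1 := (Matrix.mem_unitaryGroup_iff'.mp hU)
  unfold frob
  rw [frob_sq_eq_trace, frob_sq_eq_trace]
  congr 2
  have key : (Uᴴ * A * U)ᴴ * (Uᴴ * A * U) = Uᴴ * (Aᴴ * (A * U)) := by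
    simp only [Matrix.conjTranspose_mul, Matrix.conjTranspose_conjTranspose, Matrix.mul_assoc]
    rw [← Matrix.mul_assoc U Uᴴ, h1, Matrix.one_mul]
  rw [key, Matrix.trace_mul_comm, Matrix.mul_assoc Aᴴ, Matrix.mul_assoc A, h1,
    Matrix.mul_one]

lemma scalar_key (y c : ℂ) (hc : ‖c‖ = 1) :
    ‖y - (if y = 0 then 1 else y / ‖y‖)‖ ^ 2 ≤ ‖y - c‖ ^ 2 := by
  by_cases h : y = 0
  · simp [h, hc]
  · simp only [h, if_false]
    set r := ‖y‖ with hr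
    have hr0 : 0 < r := norm_pos_iff.mpr h
    have hL : ‖y - y / r‖ = |r - 1| := by
      have e1 : y - y / r = y * (1 - (r : ℂ)⁻¹) := by
        rw [mul_sub, mul_one, ← div_eq_mul_inv]
      rw [e1, norm_mul, ← hr]
      have e2 : ‖(1 : ℂ) - (r : ℂ)⁻¹‖ = |1 - r⁻¹| := by
        rw [show (1 : ℂ) - (r : ℂ)⁻¹ = ((1 - r⁻¹ : ℝ) : ℂ) by push_cast; ring,
          Complex.norm_real, Real.norm_eq_abs]
      rw [e2]
      have e3 : r * |1 - r⁻¹| = |r * (1 - r⁻¹)| := by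
        rw [abs_mul, abs_of_pos hr0]
      rw [e3]
      congr 1
      field_simp
    rw [hL]
    have hRe : (y * starRingEnd ℂ c).re ≤ r := by
      have h' := Complex.re_le_norm (y * starRingEnd ℂ c)
      rwa [norm_mul, Complex.norm_conj, hc, mul_one] at h'
    have hexp : ‖y - c‖ ^ 2 = r ^ 2 - 2 * (y * starRingEnd ℂ c).re + 1 := by
      rw [Complex.sq_norm, Complex.normSq_sub,
        Complex.normSq_eq_norm_sq, Complex.normSq_eq_norm_sq, hc]
      ring
    rw [hexp, sq_abs]
    nlinarith

/-- For `A = {U diag(c) Uᴴ : c ∈ Tⁿ}` with `U` unitary, the matrix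
`C₀ = U diag(c₀) Uᴴ`, where `c₀` is the unit-modulus normalization of the diagonal of
`Uᴴ W U`, minimizes `‖W − C‖_F` over `C ∈ A`. -/
theorem normalized_diag_minimizes_frobenius {n : ℕ}
    (U W : Matrix (Fin n) (Fin n) ℂ) (hU : U ∈ Matrix.unitaryGroup (Fin n) ℂ)
    (y : Fin n → ℂ) (hy : ∀ i, y i = (Uᴴ * W * U) i i)
    (c₀ : Fin n → ℂ)
    (hc₀ : ∀ i, c₀ i = if y i = 0 then 1 else y i / ‖y i‖)
    (C₀ : Matrix (Fin n) (Fin n) ℂ) (hC₀ : C₀ = U * Matrix.diagonal c₀ * Uᴴ) :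
    ∀ c : Fin n → ℂ, (∀ i, ‖c i‖ = 1) →
      frob (W - C₀) ≤ frob (W - U * Matrix.diagonal c * Uᴴ) := by
  intro c hc
  have h1 : U * Uᴴ = 1 := (Matrix.mem_unitaryGroup_iff.mp hU)
  have h2 : Uᴴ * U = 1 := (Matrix.mem_unitaryGroup_iff'.mp hU)
  set M := Uᴴ * W * U with hM
  have key : ∀ d : Fin n → ℂ,
      Uᴴ * (W - U * Matrix.diagonal d * Uᴴ) * U = M - Matrix.diagonal d := by
    intro d
    rw [Matrix.mul_sub, Matrix.sub_mul]
    congr 1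
    calc Uᴴ * (U * Matrix.diagonal d * Uᴴ) * U
        = (Uᴴ * U) * Matrix.diagonal d * (Uᴴ * U) := by simp only [Matrix.mul_assoc]
      _ = Matrix.diagonal d := by rw [h2]; simp
  have hfr : ∀ d : Fin n → ℂ,
      frob (W - U * Matrix.diagonal d * Uᴴ) = frob (M - Matrix.diagonal d) := by
    intro d
    rw [← key d, frob_conj _ _ hU]
  rw [hC₀, hfr c₀, hfr c]
  unfold frob
  apply Real.sqrt_le_sqrt
  apply Finset.sum_le_sum
  intro i _
  apply Finset.sum_le_sum
  intro j _
  by_cases hij : j = i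
  · subst hij
    simp only [Matrix.sub_apply, Matrix.diagonal_apply_eq]
    rw [← hy j, hc₀ j]
    exact scalar_key (y j) (c j) (hc j)
  · simp [Matrix.sub_apply, Matrix.diagonal_apply_ne' _ hij]
end

section
/- If W is a real mn×mn matrix, then the minimizer C₀ = F_{m,n} diag(c₀) F_{m,n}* of ‖W − C‖_F over the family of unitary BCCB matrices, where c₀ is the unit-modulus normalization of diag(F_{m,n}* W F_{m,n}), is a real matrix. -/
open Matrix Kronecker

/-! A real `W` commutes with conjugation, and conjugating a column of `F_{m,n}` amounts to negating
its frequency index. Hence the spectrum `y = diag(F* W F)` is conjugate symmetric,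
`y (-p) = conj (y p)`; the unit-modulus normalization commutes with conjugation, so `c₀` is
conjugate symmetric too; and for a conjugate symmetric `c` the substitution `k ↦ -k` in
`C₀ p q = ∑ₖ F p k * c k * conj (F q k)` shows `conj (C₀ p q) = C₀ p q`. -/

/-- The unitary discrete Fourier transform matrix of size `n`. -/
noncomputable def dft (n : ℕ) : Matrix (Fin n) (Fin n) ℂ := fun j k =>
  Complex.exp (-2 * Real.pi * Complex.I * (j.1 : ℂ) * (k.1 : ℂ) / (n : ℂ)) / Real.sqrt n

/-- The two-dimensional unitary DFT matrix `F_{m,n} = F_m ⊗ F_n`. -/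
noncomputable def dft2 (m n : ℕ) : Matrix (Fin m × Fin n) (Fin m × Fin n) ℂ :=
  dft m ⊗ₖ dft n

section ConjSymm

variable {ι R : Type*} [InvolutiveNeg ι] [CommSemiring R] [StarRing R]

def IsConjSymm (v : ι → R) : Prop := ∀ p, star (v p) = v (-p)

lemma IsConjSymm.comp {v : ι → R} (hv : IsConjSymm v) {f : R → R}
    (hf : ∀ z, star (f z) = f (star z)) : IsConjSymm (f ∘ v) := fun p => by
  simp only [Function.comp_apply, hf, hv p]

variable [Fintype ι] {F : Matrix ι ι R}

lemma isConjSymm_diag_conjTranspose_mul_mul (hF : ∀ j, IsConjSymm (F j)) {W : Matrix ι ι R}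
    (hW : ∀ a b, star (W a b) = W a b) : IsConjSymm (Fᴴ * W * F).diag := fun p => by
  simp [mul_apply, star_sum, hF _ _, hW]

lemma star_mul_diagonal_mul_conjTranspose_apply [DecidableEq ι] (hF : ∀ j, IsConjSymm (F j))
    {c : ι → R} (hc : IsConjSymm c) (p q : ι) :
    star ((F * diagonal c * Fᴴ) p q) = (F * diagonal c * Fᴴ) p q := by
  simp only [mul_apply (M := F * diagonal c), mul_diagonal, conjTranspose_apply]
  calc star (∑ k, F p k * c k * star (F q k))
      = ∑ k, F p (-k) * c (-k) * star (F q (-k)) := by simp [star_sum, hF _ _, hc _]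
    _ = ∑ k, F p k * c k * star (F q k) :=
        Equiv.sum_comp (Equiv.neg ι) fun k => F p k * c k * star (F q k)

end ConjSymm

lemma dvd_val_neg_add_val {n : ℕ} (k : Fin n) : n ∣ (-k : Fin n).val + k.val := by
  rw [← Nat.modEq_zero_iff_dvd, Fin.val_neg']
  calc (n - k) % n + k ≡ n - k + k [MOD n] := (Nat.mod_modEq _ _).add_right _
    _ = n := Nat.sub_add_cancel k.is_le'
    _ ≡ 0 [MOD n] := Nat.modEq_zero_iff_dvd.2 dvd_rfl

lemma star_dft_apply {n : ℕ} (j k : Fin n) : star (dft n j k) = dft n j (-k) := by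
  obtain ⟨t, ht⟩ := dvd_val_neg_add_val k
  have hn : (n : ℂ) ≠ 0 := Nat.cast_ne_zero.2 k.pos.ne'
  have ht' : ((-k : Fin n).val : ℂ) = n * t - k.val := by
    rw [eq_sub_iff_add_eq]; exact_mod_cast ht
  simp only [dft, star_div₀, ← Complex.exp_conj, Complex.star_def]
  congr 1
  · rw [Complex.exp_eq_exp_iff_exists_int]
    refine ⟨j.val * t, ?_⟩
    simp only [map_div₀, map_mul, map_neg, map_ofNat, Complex.conj_ofReal, Complex.conj_I,
      map_natCast, ht', Int.cast_mul, Int.cast_natCast]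
    field_simp
    ring
  · exact Complex.conj_ofReal _

lemma star_dft2_apply {m n : ℕ} (p q : Fin m × Fin n) :
    star (dft2 m n p q) = dft2 m n p (-q) := by
  simp [dft2, kroneckerMap_apply, star_dft_apply]

noncomputable def unitNormalize (z : ℂ) : ℂ := if z = 0 then 1 else z / ‖z‖

lemma star_unitNormalize (z : ℂ) : star (unitNormalize z) = unitNormalize (star z) := by
  by_cases hz : z = 0 <;> simp [unitNormalize, hz]

theorem bccb_minimizer_of_real_is_real_general {m n : ℕ}
    (W : Matrix (Fin m × Fin n) (Fin m × Fin n) ℂ)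
    (hW : ∀ p q, (W p q).im = 0)
    (y : Fin m × Fin n → ℂ)
    (hy : ∀ p, y p = ((dft2 m n)ᴴ * W * dft2 m n) p p)
    (c₀ : Fin m × Fin n → ℂ)
    (hc₀ : ∀ p, c₀ p = if y p = 0 then 1 else y p / ‖y p‖)
    (C₀ : Matrix (Fin m × Fin n) (Fin m × Fin n) ℂ)
    (hC₀ : C₀ = dft2 m n * Matrix.diagonal c₀ * (dft2 m n)ᴴ) :
    ∀ p q, (C₀ p q).im = 0 := by
  have hF : ∀ p, IsConjSymm (dft2 m n p) := star_dft2_apply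
  have hy_symm : IsConjSymm y := by
    rw [show y = _ from funext hy]
    exact isConjSymm_diag_conjTranspose_mul_mul hF fun a b => Complex.conj_eq_iff_im.2 (hW a b)
  have hc₀_symm : IsConjSymm c₀ := by
    rw [show c₀ = unitNormalize ∘ y from funext hc₀]
    exact hy_symm.comp star_unitNormalize
  intro p q
  rw [← Complex.conj_eq_iff_im, hC₀]
  exact star_mul_diagonal_mul_conjTranspose_apply hF hc₀_symm p q

/-- If `W` is a real `mn × mn` matrix, then the unitary-BCCB minimizer
`C₀ = F diag(c₀) Fᴴ`, where `c₀` is the unit-modulus normalization of the diagonal of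
`Fᴴ W F`, is a real matrix. -/
theorem bccb_minimizer_of_real_is_real {m n : ℕ} [NeZero m] [NeZero n]
    (W : Matrix (Fin m × Fin n) (Fin m × Fin n) ℂ)
    (hW : ∀ p q, (W p q).im = 0)
    (y : Fin m × Fin n → ℂ)
    (hy : ∀ p, y p = ((dft2 m n)ᴴ * W * dft2 m n) p p)
    (c₀ : Fin m × Fin n → ℂ)
    (hc₀ : ∀ p, c₀ p = if y p = 0 then 1 else y p / ‖y p‖)
    (C₀ : Matrix (Fin m × Fin n) (Fin m × Fin n) ℂ)
    (hC₀ : C₀ = dft2 m n * Matrix.diagonal c₀ * (dft2 m n)ᴴ) :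
    ∀ p q, (C₀ p q).im = 0 :=
  bccb_minimizer_of_real_is_real_general W hW y hy c₀ hc₀ C₀ hC₀
end
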